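/- arXiv:1611.04498 — 3 statements merged into one kernel-verified Lean document; each statement's English description precedes it below -/
import Mathlib

section
/- There is an absolute constant C > 0 such that for every real N ≥ 1 and every t ∈ ℝ, ∫_{−1/2}^{1/2} B(u) B(t−u) du ≤ C · N · log(2 + N‖t‖) / (2 + N‖t‖), where B(u) = min(N, ‖u‖^{−1}). -/
/-- `‖t‖`, the distance from `t` to the nearest integer. -/
noncomputable def distNearestInt (t : ℝ) : ℝ := |t - (round t : ℤ)|

/-- `B(t) = min(N, ‖t‖⁻¹)` (interpreted as `N` when `‖t‖ = 0`). -/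
noncomputable def Bfun (N t : ℝ) : ℝ :=
  if distNearestInt t = 0 then N else min N (distNearestInt t)⁻¹

/-! Write `δ = ‖t‖`. For `|u| ≤ 1/2` we have `‖u‖ = |u|` and `‖t - u‖ ≥ ||u| - δ|`,
while `B(x) ≤ 2N / (1 + N c)` as soon as `‖x‖ ≥ c`. Substituting `s = N |u|`, the integral
is therefore at most `8 N ∫₀^{N/2} ds / ((1 + s)(1 + |s - D|))` with `D = N δ`. On `[0, D]`
partial fractions give exactly `2 log (1 + D) / (2 + D)`; on `[D, N/2]` the integral is at
most `min (1, log (1 + D) / D)`, which is `O (log (2 + D) / (2 + D))`. -/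

open Real Set Interval intervalIntegral

lemma distNearestInt_eq_norm (t : ℝ) : distNearestInt t = ‖(t : UnitAddCircle)‖ :=
  UnitAddCircle.norm_eq.symm

lemma distNearestInt_nonneg (t : ℝ) : 0 ≤ distNearestInt t := abs_nonneg _

lemma distNearestInt_le_half (t : ℝ) : distNearestInt t ≤ 1 / 2 := abs_sub_round t

lemma distNearestInt_eq_abs {u : ℝ} (hu : |u| ≤ 1 / 2) : distNearestInt u = |u| := by
  rw [distNearestInt_eq_norm, AddCircle.norm_coe_eq_abs_iff (p := 1) one_ne_zero]
  simpa using hu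

lemma abs_sub_distNearestInt_le (a b : ℝ) :
    |distNearestInt a - distNearestInt b| ≤ distNearestInt (b - a) := by
  simpa only [distNearestInt_eq_norm, AddCircle.coe_sub, norm_sub_rev (b : UnitAddCircle)]
    using abs_norm_sub_norm_le _ _

lemma Bfun_nonneg {N : ℝ} (hN : 0 ≤ N) (x : ℝ) : 0 ≤ Bfun N x := by
  unfold Bfun
  split_ifs
  · exact hN
  · exact le_min hN (inv_nonneg.mpr (distNearestInt_nonneg x))

lemma Bfun_le {N c x : ℝ} (hN : 0 ≤ N) (hc : 0 ≤ c) (h : c ≤ distNearestInt x) :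
    Bfun N x ≤ 2 * N * (1 + N * c)⁻¹ := by
  have hBN : Bfun N x ≤ N := by unfold Bfun; split_ifs <;> simp
  rcases le_or_gt (N * c) 1 with hle | hgt
  · refine hBN.trans ?_
    rw [← div_eq_mul_inv, le_div_iff₀ (by positivity)]
    nlinarith
  · have hc0 : 0 < c := pos_of_mul_pos_right (by linarith) hN
    have hx : distNearestInt x ≠ 0 := (hc0.trans_le h).ne'
    calc Bfun N x ≤ (distNearestInt x)⁻¹ := by rw [Bfun, if_neg hx]; exact min_le_right _ _
      _ ≤ c⁻¹ := by gcongr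
      _ ≤ 2 * N * (1 + N * c)⁻¹ := by
        rw [← div_eq_mul_inv, inv_eq_one_div, div_le_div_iff₀ hc0 (by positivity)]
        linarith

section InvAdd

variable {a b c : ℝ}

lemma add_pos_of_mem_uIcc (ha : 0 < c + a) (hb : 0 < c + b) {x : ℝ} (hx : x ∈ [[a, b]]) :
    0 < c + x := by
  rcases le_total a b with h | h
  · rw [uIcc_of_le h] at hx; linarith [hx.1]
  · rw [uIcc_of_ge h] at hx; linarith [hx.1]

lemma intervalIntegrable_inv_add (ha : 0 < c + a) (hb : 0 < c + b) :
    IntervalIntegrable (fun s => (c + s)⁻¹) MeasureTheory.volume a b :=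
  intervalIntegrable_inv (fun _ hx => (add_pos_of_mem_uIcc ha hb hx).ne') (by fun_prop)

lemma integral_inv_add (ha : 0 < c + a) (hb : 0 < c + b) :
    ∫ s in a..b, (c + s)⁻¹ = log ((c + b) / (c + a)) := by
  rw [integral_comp_add_left (fun s => s⁻¹), integral_inv_of_pos ha hb]

end InvAdd

noncomputable def pairKernel (D s : ℝ) : ℝ := (1 + |s|)⁻¹ * (1 + |s - D|)⁻¹

@[fun_prop]
lemma continuous_pairKernel (D : ℝ) : Continuous (pairKernel D) := by
  have h : ∀ x : ℝ, 1 + |x| ≠ 0 := fun x => by positivity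
  exact ((continuous_const.add continuous_abs).inv₀ h).mul
    ((continuous_const.add (continuous_sub_right D).abs).inv₀ fun s => h (s - D))

section PairKernel

variable {D M : ℝ}

lemma integral_pairKernel_near (hD : 0 ≤ D) :
    ∫ s in 0..D, pairKernel D s = 2 * log (1 + D) / (2 + D) := by
  -- partial fractions: `(1 + s) + (1 + (D - s)) = 2 + D`
  have hsplit : EqOn (pairKernel D)
      (fun s => (2 + D)⁻¹ * ((1 + s)⁻¹ + (1 + (D - s))⁻¹)) [[0, D]] := by
    intro s hs
    rw [uIcc_of_le hD] at hs
    have h1 : 0 < 1 + s := by linarith [hs.1]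
    have h2 : 0 < 1 + D - s := by linarith [hs.2]
    simp only [pairKernel, abs_of_nonneg hs.1, abs_of_nonpos (sub_nonpos.2 hs.2)]
    rw [neg_sub, ← add_sub_assoc]
    field_simp
    ring
  have hint : IntervalIntegrable (fun s => (1 + s)⁻¹) MeasureTheory.volume 0 D :=
    intervalIntegrable_inv_add (by norm_num) (by linarith)
  have hflip : ∫ s in 0..D, (1 + (D - s))⁻¹ = ∫ s in 0..D, (1 + s)⁻¹ := by
    simpa using integral_comp_sub_left (fun s => (1 + s)⁻¹) D (a := 0) (b := D)
  rw [integral_congr hsplit, integral_const_mul,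
    integral_add hint (by simpa using (hint.comp_sub_left D).symm), hflip,
    integral_inv_add (by norm_num) (by linarith)]
  simp only [add_zero, div_one]
  field_simp
  ring

lemma mul_integral_pairKernel_far_le (hD : 0 ≤ D) (hDM : D ≤ M) :
    D * ∫ s in D..M, pairKernel D s ≤ log (1 + D) := by
  have hsplit : EqOn (fun s => D * pairKernel D s)
      (fun s => ((1 - D) + s)⁻¹ - (1 + s)⁻¹) [[D, M]] := by
    intro s hs
    rw [uIcc_of_le hDM] at hs
    have h1 : 0 < 1 + s := by linarith [hs.1]
    have h2 : 0 < 1 - D + s := by linarith [hs.1]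
    simp only [pairKernel, abs_of_nonneg (hD.trans hs.1), abs_of_nonneg (sub_nonneg.2 hs.1)]
    rw [show 1 + (s - D) = 1 - D + s by ring]
    field_simp
    ring
  rw [← integral_const_mul, integral_congr hsplit,
    integral_sub (intervalIntegrable_inv_add (by linarith) (by linarith))
      (intervalIntegrable_inv_add (by linarith) (by linarith)),
    integral_inv_add (by linarith) (by linarith), integral_inv_add (by linarith) (by linarith),
    log_div (by linarith) (by linarith), log_div (by linarith) (by linarith)]
  have : log (1 - D + M) ≤ log (1 + M) := log_le_log (by linarith) (by linarith)
  simp only [sub_add_cancel, log_one, sub_zero]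
  linarith

lemma integral_pairKernel_far_le_one (hD : 0 ≤ D) (hDM : D ≤ M) :
    ∫ s in D..M, pairKernel D s ≤ 1 := by
  have hpos : ∀ s ∈ [[D, M]], 0 < 1 - D + s := fun s hs =>
    add_pos_of_mem_uIcc (by linarith) (by linarith) hs
  have hderiv : ∀ s ∈ [[D, M]],
      HasDerivAt (fun s => -(1 - D + s)⁻¹) ((1 - D + s) ^ 2)⁻¹ s := by
    intro s hs
    refine ((((hasDerivAt_id' s).const_add (1 - D)).inv (hpos s hs).ne').neg).congr_deriv ?_
    rw [neg_div, neg_neg, one_div]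
  have hint : IntervalIntegrable (fun s => ((1 - D + s) ^ 2)⁻¹) MeasureTheory.volume D M :=
    intervalIntegrable_inv (fun s hs => (pow_pos (hpos s hs) 2).ne') (by fun_prop)
  calc ∫ s in D..M, pairKernel D s ≤ ∫ s in D..M, ((1 - D + s) ^ 2)⁻¹ := by
        refine integral_mono_on hDM
          ((continuous_pairKernel D).intervalIntegrable _ _) hint fun s hs => ?_
        have h1 : 0 < 1 - D + s := by linarith [hs.1]
        simp only [pairKernel, abs_of_nonneg (hD.trans hs.1), abs_of_nonneg (sub_nonneg.2 hs.1),
          sq, mul_inv]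
        rw [show 1 + (s - D) = 1 - D + s by ring]
        gcongr
        linarith
    _ = 1 - (1 - D + M)⁻¹ := by
        rw [integral_eq_sub_of_hasDerivAt hderiv hint, sub_add_cancel, inv_one]
        ring
    _ ≤ 1 := by
        have : 0 < 1 - D + M := by linarith
        linarith [inv_nonneg.2 this.le]

lemma le_five_mul_log_div_of_mul_le_log {F : ℝ} (hD : 0 ≤ D) (hlog : D * F ≤ log (1 + D))
    (hone : F ≤ 1) : F ≤ 5 * log (2 + D) / (2 + D) := by
  rw [le_div_iff₀ (by linarith)]
  have hmono : log (1 + D) ≤ log (2 + D) := log_le_log (by linarith) (by linarith)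
  rcases le_or_gt 1 D with h1 | h1
  · -- `2 + D ≤ 3 D`
    have hlog0 : 0 ≤ log (1 + D) := log_nonneg (by linarith)
    nlinarith
  · -- `(2 + D) F < 3 < 5 log 2`
    have h2 : log 2 ≤ log (2 + D) := log_le_log (by norm_num) (by linarith)
    have := log_two_gt_d9
    nlinarith

lemma integral_pairKernel_le (hD : 0 ≤ D) (hDM : D ≤ M) :
    ∫ s in 0..M, pairKernel D s ≤ 7 * log (2 + D) / (2 + D) := by
  have hint := (continuous_pairKernel D).intervalIntegrable (μ := MeasureTheory.volume)
  have hnear : ∫ s in 0..D, pairKernel D s ≤ 2 * log (2 + D) / (2 + D) := by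
    rw [integral_pairKernel_near hD]
    gcongr
    linarith
  have hfar := le_five_mul_log_div_of_mul_le_log hD (mul_integral_pairKernel_far_le hD hDM)
    (integral_pairKernel_far_le_one hD hDM)
  rw [← integral_add_adjacent_intervals (hint 0 D) (hint D M)]
  linarith [show 7 * log (2 + D) / (2 + D)
    = 2 * log (2 + D) / (2 + D) + 5 * log (2 + D) / (2 + D) by ring]

end PairKernel

lemma integral_comp_abs_eq_two_mul {f : ℝ → ℝ} (hf : Continuous f) {c : ℝ} (hc : 0 ≤ c) :
    ∫ x in -c..c, f |x| = 2 * ∫ x in 0..c, f x := by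
  have hint : ∀ a b, IntervalIntegrable (fun x => f |x|) MeasureTheory.volume a b :=
    (hf.comp continuous_abs).intervalIntegrable
  have hpos : ∫ x in 0..c, f |x| = ∫ x in 0..c, f x :=
    integral_congr fun x hx => by
      rw [uIcc_of_le hc] at hx
      rw [abs_of_nonneg hx.1]
  have hneg : ∫ x in -c..0, f |x| = ∫ x in 0..c, f |x| := by
    simpa using (integral_comp_neg (fun x => f |x|) (a := 0) (b := c)).symm
  rw [← integral_add_adjacent_intervals (hint _ 0) (hint 0 _), hneg, hpos, two_mul]

lemma Bfun_mul_Bfun_sub_le {N : ℝ} (hN : 0 ≤ N) (t : ℝ) {u : ℝ} (hu : |u| ≤ 1 / 2) :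
    Bfun N u * Bfun N (t - u) ≤ 4 * N ^ 2 * pairKernel (N * distNearestInt t) (N * |u|) := by
  have hu' := distNearestInt_eq_abs hu
  have h1 : Bfun N u ≤ 2 * N * (1 + N * |u|)⁻¹ := Bfun_le hN (abs_nonneg u) hu'.ge
  have h2 : Bfun N (t - u) ≤ 2 * N * (1 + N * |(|u|) - distNearestInt t|)⁻¹ := by
    refine Bfun_le hN (abs_nonneg _) ?_
    simpa [hu'] using abs_sub_distNearestInt_le u t
  calc Bfun N u * Bfun N (t - u)
      ≤ (2 * N * (1 + N * |u|)⁻¹) * (2 * N * (1 + N * |(|u|) - distNearestInt t|)⁻¹) :=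
        mul_le_mul h1 h2 (Bfun_nonneg hN _) (by positivity)
    _ = 4 * N ^ 2 * pairKernel (N * distNearestInt t) (N * |u|) := by
        rw [pairKernel, ← mul_sub, abs_mul, abs_mul, abs_abs, abs_of_nonneg hN]
        ring

lemma integral_Bfun_mul_Bfun_sub_le {N : ℝ} (hN : 0 < N) (t : ℝ) :
    ∫ u in (-(1 : ℝ) / 2)..(1 / 2), Bfun N u * Bfun N (t - u)
      ≤ 8 * N * ∫ s in 0..N / 2, pairKernel (N * distNearestInt t) s := by
  set K := pairKernel (N * distNearestInt t)
  calc ∫ u in (-(1 : ℝ) / 2)..(1 / 2), Bfun N u * Bfun N (t - u)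
      ≤ ∫ u in -(1 / 2 : ℝ)..(1 / 2), 4 * N ^ 2 * K (N * |u|) := by
        rw [neg_div, integral_of_le (by norm_num), integral_of_le (by norm_num)]
        refine MeasureTheory.integral_mono_of_nonneg
          (MeasureTheory.ae_of_all _ fun u =>
            mul_nonneg (Bfun_nonneg hN.le u) (Bfun_nonneg hN.le _))
          (by fun_prop : Continuous fun u => 4 * N ^ 2 * K (N * |u|)).integrableOn_Ioc
          ((MeasureTheory.ae_restrict_iff' measurableSet_Ioc).mpr
            (MeasureTheory.ae_of_all _ fun u hu => Bfun_mul_Bfun_sub_le hN.le t ?_))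
        rw [abs_le]
        exact ⟨hu.1.le, hu.2⟩
    _ = 2 * ∫ u in 0..1 / 2, 4 * N ^ 2 * K (N * u) :=
        integral_comp_abs_eq_two_mul (f := fun u => 4 * N ^ 2 * K (N * u)) (by fun_prop)
          (by norm_num)
    _ = 8 * N * ∫ s in 0..N / 2, K s := by
        rw [integral_const_mul, integral_comp_mul_left K hN.ne', smul_eq_mul, mul_zero]
        field_simp
        ring

/-- `(B * B)(t) = ∫_{-1/2}^{1/2} B(u) B(t-u) du ≤ C N log(2 + N‖t‖)/(2 + N‖t‖)`. -/
theorem stmt_9 :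
    ∃ C : ℝ, 0 < C ∧ ∀ (N : ℝ), 1 ≤ N → ∀ t : ℝ,
      (∫ u in (-(1 : ℝ) / 2)..(1 / 2), Bfun N u * Bfun N (t - u))
        ≤ C * N * Real.log (2 + N * distNearestInt t) / (2 + N * distNearestInt t) := by
  refine ⟨56, by norm_num, fun N hN t => ?_⟩
  have hN0 : 0 < N := one_pos.trans_le hN
  have hδ : 0 ≤ N * distNearestInt t := mul_nonneg hN0.le (distNearestInt_nonneg t)
  have hδM : N * distNearestInt t ≤ N / 2 := by
    have := distNearestInt_le_half t
    nlinarith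
  calc _ ≤ 8 * N * ∫ s in 0..N / 2, pairKernel (N * distNearestInt t) s :=
        integral_Bfun_mul_Bfun_sub_le hN0 t
    _ ≤ 8 * N * (7 * log (2 + N * distNearestInt t) / (2 + N * distNearestInt t)) := by
        gcongr
        exact integral_pairKernel_le hδ hδM
    _ = _ := by ring
end

section
/- There exists δ > 0 such that for every R₀ there is an R ≥ R₀ with N₂(R) − (8/3)R² ≥ δ R^{1/2}; that is, the error term N₂(R) − |P₂|R² is Ω₊(R^{1/2}). -/
/-!
Count the lattice points of `q • P₂` column by column: for an integer `q > 0` the column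
over `m` holds `2 t + 1` points, where `q t = (q² - m²) - r` and `r ∈ [0, q)` is the residue of
`-m²` mod `q`. If `j² = -1` mod `q`, then `x ↦ j x` swaps the residues of `x²` and `-x²`, which sum
to `q` unless `x² = 0`; so the residues of `-m²` average `q / 2` off the `c` roots of `x² = 0`, and
`3 N₂(q) = 8 q² + 6 c + 1`. For `q = p²` with `p ≡ 1 mod 4` prime, `-1` is a square mod `p²` and
the multiples of `p` give `c ≥ p = √q`, so `N₂(q) - (8/3) q² ≥ 2 √q`.
-/

/-- Number of lattice points in the dilate `R · P₂`, where
`P₂ = {(x,y) : |y| ≤ 1 - x²}`. -/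
noncomputable def latticePointsParabola (R : ℝ) : ℕ :=
  Nat.card {p : ℤ × ℤ // |(p.2 : ℝ) / R| ≤ 1 - ((p.1 : ℝ) / R) ^ 2}

open Finset

theorem isSquare_neg_one_zmod_pow_succ {p : ℕ} (hp : Odd p) (h : IsSquare (-1 : ZMod p))
    (k : ℕ) : IsSquare (-1 : ZMod (p ^ (k + 1))) := by
  obtain ⟨i, hi⟩ := h
  obtain ⟨a, rfl⟩ := ZMod.intCast_surjective i
  have hdvd : (p : ℤ) ∣ a * a - (-1) :=
    (ZMod.intCast_eq_intCast_iff_dvd_sub _ _ _).mp (by push_cast; exact hi)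
  -- raising to the power `p ^ k` turns a congruence mod `p` into one mod `p ^ (k + 1)`
  have hlift := dvd_sub_pow_of_dvd_sub hdvd k
  rw [(hp.pow (n := k)).neg_one_pow] at hlift
  refine ⟨((a ^ p ^ k : ℤ) : ZMod (p ^ (k + 1))), ?_⟩
  have := (ZMod.intCast_eq_intCast_iff_dvd_sub (-1) ((a * a) ^ p ^ k) (p ^ (k + 1))).mpr
    (by exact_mod_cast hlift)
  push_cast at this ⊢
  rw [this, mul_pow]

theorem le_card_filter_sq_eq_zero (n : ℕ) [NeZero n] :
    n ≤ #{x : ZMod (n ^ 2) | x ^ 2 = 0} := by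
  have hn : 0 < n := Nat.pos_of_neZero n
  calc n = #(range n) := (card_range n).symm
    _ ≤ _ := card_le_card_of_injOn (fun k => ((k * n : ℕ) : ZMod (n ^ 2))) ?_ ?_
  · intro k _
    simp only [mem_coe, mem_filter, mem_univ, true_and]
    rw [← Nat.cast_pow, mul_pow, Nat.cast_mul, ZMod.natCast_self, mul_zero]
  · intro k hk l hl hkl
    rw [coe_range, Set.mem_Iio] at hk hl
    have hkn : k * n < n ^ 2 := by nlinarith
    have hln : l * n < n ^ 2 := by nlinarith
    have := congrArg ZMod.val hkl
    simp only [ZMod.val_natCast_of_lt hkn, ZMod.val_natCast_of_lt hln] at this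
    exact Nat.eq_of_mul_eq_mul_right hn this

section ZModSums

variable {q : ℕ} [NeZero q] {M : Type*} [AddCommMonoid M]

theorem sum_Ico_intCast_zmod (g : ZMod q → M) (a : ℤ) :
    ∑ m ∈ Ico a (a + q), g m = ∑ x, g x := by
  have hq : (0 : ℤ) < q := by exact_mod_cast Nat.pos_of_neZero q
  refine sum_nbij' (↑) (fun x => a + ((x.val : ℤ) - a) % q) (by simp) ?_ ?_ ?_
    (fun _ _ => rfl)
  · intro x _
    have := Int.emod_nonneg ((x.val : ℤ) - a) hq.ne'
    have := Int.emod_lt_of_pos ((x.val : ℤ) - a) hq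
    simp only [mem_Ico]
    omega
  · intro m hm
    simp only [mem_Ico] at hm
    rw [ZMod.val_intCast, ((Int.mod_modEq m q).sub_right a).eq,
      Int.emod_eq_of_lt (by omega) (by omega)]
    ring
  · intro x _
    simp [ZMod.intCast_mod]

theorem sum_Icc_neg_intCast_zmod (g : ZMod q → M) :
    ∑ m ∈ Icc (-q : ℤ) q, g m = 2 • ∑ x, g x + g 0 := by
  have hq : (0 : ℤ) ≤ q := by positivity
  rw [← Ico_insert_right (by omega), sum_insert (by simp), ← Ico_union_Ico_eq_Ico (b := 0)
    (by omega) hq, sum_union (Ico_disjoint_Ico_consecutive _ _ _)]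
  have hneg := sum_Ico_intCast_zmod g (-q)
  have hpos := sum_Ico_intCast_zmod g 0
  rw [neg_add_cancel] at hneg
  rw [zero_add] at hpos
  rw [hneg, hpos, Int.cast_natCast, ZMod.natCast_self, two_nsmul, add_comm]

theorem two_mul_sum_val_neg_sq (h : IsSquare (-1 : ZMod q)) :
    2 * ∑ x : ZMod q, ((-x ^ 2).val : ℤ) = q * (q - #{x : ZMod q | x ^ 2 = 0}) := by
  obtain ⟨j, hj⟩ := h
  have hjunit : IsUnit j := IsUnit.of_mul_eq_one (-j) (by rw [mul_neg, ← hj, neg_neg])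
  have hrot : ∑ x : ZMod q, ((-x ^ 2).val : ℤ) = ∑ x : ZMod q, ((x ^ 2).val : ℤ) :=
    Fintype.sum_bijective (j * ·) (IsUnit.isUnit_iff_mulLeft_bijective.mp hjunit) _ _
      (fun x => by rw [mul_pow, sq j, ← hj, neg_one_mul])
  have hpair (y : ZMod q) : (y.val : ℤ) + (-y).val = if y = 0 then (0 : ℤ) else q := by
    rw [ZMod.neg_val]
    split_ifs with hy
    · simp [hy]
    · rw [Nat.cast_sub (ZMod.val_lt y).le]
      ring
  have hsplit := card_filter_add_card_filter_not (s := univ) (fun x : ZMod q => x ^ 2 = 0)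
  rw [card_univ, ZMod.card] at hsplit
  calc 2 * ∑ x : ZMod q, ((-x ^ 2).val : ℤ)
      = ∑ x : ZMod q, (((x ^ 2).val : ℤ) + (-x ^ 2).val) := by
        rw [sum_add_distrib, ← hrot, two_mul]
    _ = q * #{x : ZMod q | ¬ x ^ 2 = 0} := by
        simp only [hpair, sum_ite, sum_const_zero, sum_const, nsmul_eq_mul, zero_add, mul_comm]
    _ = q * (q - #{x : ZMod q | x ^ 2 = 0}) := by
        congr 1
        omega

end ZModSums

theorem three_mul_sum_Icc_neg_sq (q : ℕ) :
    3 * ∑ m ∈ Icc (-q : ℤ) q, m ^ 2 = q * (q + 1) * (2 * q + 1) := by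
  induction q with
  | zero => simp
  | succ q ih =>
    have hIcc : Icc (-(q + 1 : ℕ) : ℤ) (q + 1 : ℕ) =
        insert (-(q + 1) : ℤ) (insert (q + 1 : ℤ) (Icc (-q : ℤ) q)) := by
      ext m
      simp only [mem_insert, mem_Icc]
      omega
    rw [hIcc, sum_insert (by simp only [mem_insert, mem_Icc]; omega), sum_insert (by simp),
      mul_add, mul_add, ih]
    push_cast
    ring

theorem abs_div_le_one_sub_div_sq_iff {R : ℝ} (hR : 0 < R) (x y : ℝ) :
    |y / R| ≤ 1 - (x / R) ^ 2 ↔ x ^ 2 + R * |y| ≤ R ^ 2 := by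
  have key : 1 - (x / R) ^ 2 - |y / R| = (R ^ 2 - (x ^ 2 + R * |y|)) * (R ^ 2)⁻¹ := by
    rw [abs_div, abs_of_pos hR]
    field_simp
    ring
  rw [← sub_nonneg, key, ← sub_nonneg (b := x ^ 2 + _)]
  exact mul_nonneg_iff_of_pos_right (by positivity)

theorem card_filter_sq_add_mul_abs_le {Q m : ℤ} (hQ : 0 < Q) (hm : m ∈ Icc (-Q) Q) :
    (#{n ∈ Icc (-Q) Q | m ^ 2 + Q * |n| ≤ Q ^ 2} : ℤ) = 2 * ((Q ^ 2 - m ^ 2) / Q) + 1 := by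
  set t := (Q ^ 2 - m ^ 2) / Q
  have ht : t ≤ Q := Int.ediv_le_of_le_mul hQ (by nlinarith [sq_nonneg m])
  have ht0 : 0 ≤ t := by
    rw [mem_Icc] at hm
    exact Int.ediv_nonneg (by nlinarith) hQ.le
  have hfiber : {n ∈ Icc (-Q) Q | m ^ 2 + Q * |n| ≤ Q ^ 2} = Icc (-t) t := by
    ext n
    rw [mem_filter, mem_Icc, mem_Icc, ← abs_le, ← abs_le, Int.le_ediv_iff_mul_le hQ]
    constructor
    · rintro ⟨-, h⟩
      linarith
    · intro h
      exact ⟨by nlinarith, by linarith⟩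
  rw [hfiber, Int.card_Icc, Int.toNat_of_nonneg (by omega)]
  ring

theorem latticePointsParabola_natCast (q : ℕ) (hq : 0 < q) :
    latticePointsParabola q =
      ∑ m ∈ Icc (-q : ℤ) q, #{n ∈ Icc (-q : ℤ) q | m ^ 2 + q * |n| ≤ (q : ℤ) ^ 2} := by
  have hmem (z : ℤ × ℤ) : |(z.2 : ℝ) / q| ≤ 1 - ((z.1 : ℝ) / q) ^ 2 ↔
      z ∈ ({z ∈ Icc (-q : ℤ) q ×ˢ Icc (-q : ℤ) q | z.1 ^ 2 + q * |z.2| ≤ (q : ℤ) ^ 2} :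
        Finset (ℤ × ℤ)) := by
    have hcast : (z.1 : ℝ) ^ 2 + q * |(z.2 : ℝ)| ≤ (q : ℝ) ^ 2 ↔
        z.1 ^ 2 + q * |z.2| ≤ (q : ℤ) ^ 2 := by
      exact_mod_cast Iff.rfl
    rw [abs_div_le_one_sub_div_sq_iff (by exact_mod_cast hq), hcast, mem_filter, mem_product,
      mem_Icc, mem_Icc]
    refine ⟨fun h => ⟨⟨⟨by nlinarith [abs_nonneg z.2], by nlinarith [abs_nonneg z.2]⟩, ?_⟩, h⟩,
      And.right⟩
    exact abs_le.mp (by nlinarith [sq_nonneg z.1])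
  rw [latticePointsParabola, Nat.card_congr (Equiv.subtypeEquivRight hmem),
    Nat.card_eq_fintype_card, Fintype.card_coe]
  simp only [card_filter, sum_product]

theorem three_mul_latticePointsParabola_natCast (q : ℕ) [NeZero q]
    (h : IsSquare (-1 : ZMod q)) :
    3 * (latticePointsParabola q : ℤ) = 8 * q ^ 2 + 6 * #{x : ZMod q | x ^ 2 = 0} + 1 := by
  have hq : (0 : ℤ) < q := by exact_mod_cast Nat.pos_of_neZero q
  have hS := two_mul_sum_val_neg_sq h
  set G : ZMod q → ℤ := fun x => ((-x ^ 2).val : ℤ)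
  have hN : (latticePointsParabola q : ℤ) =
      ∑ m ∈ Icc (-q : ℤ) q, (2 * ((q ^ 2 - m ^ 2) / q) + 1) := by
    rw [latticePointsParabola_natCast q (Nat.pos_of_neZero q), Nat.cast_sum]
    exact sum_congr rfl fun m hm => card_filter_sq_add_mul_abs_le hq hm
  have hcolumn (m : ℤ) :
      q * (2 * ((q ^ 2 - m ^ 2) / q) + 1) = 2 * (q ^ 2 - m ^ 2) + q - 2 * G m := by
    have hG : G m = (q ^ 2 - m ^ 2) % q := by
      have : (-(m : ZMod q) ^ 2) = ((q ^ 2 - m ^ 2 : ℤ) : ZMod q) := by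
        push_cast
        rw [ZMod.natCast_self]
        ring
      simp only [G, this, ZMod.val_intCast]
    linear_combination 2 * Int.mul_ediv_add_emod (q ^ 2 - m ^ 2) q + 2 * hG
  have hcard : (#(Icc (-q : ℤ) q) : ℤ) = 2 * q + 1 := by
    rw [Int.card_Icc, Int.toNat_of_nonneg (by omega)]
    ring
  have hG := sum_Icc_neg_intCast_zmod G
  have hG0 : G 0 = 0 := by simp [G]
  have hsq := three_mul_sum_Icc_neg_sq q
  apply mul_left_cancel₀ hq.ne'
  rw [hN, mul_left_comm, mul_sum]
  simp only [hcolumn, sum_sub_distrib, sum_add_distrib, ← mul_sum, sum_const, nsmul_eq_mul,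
    hcard, hG, hG0]
  push_cast
  linear_combination (-2) * hsq + (-6) * hS

/-- The error term `N₂(R) - |P₂| R²` is `Ω₊(R^{1/2})`. -/
theorem stmt_10 :
    ∃ δ : ℝ, 0 < δ ∧ ∀ R₀ : ℝ, ∃ R : ℝ, R₀ ≤ R ∧ 1 < R ∧
      δ * Real.sqrt R ≤ (latticePointsParabola R : ℝ) - 8 / 3 * R ^ 2 := by
  refine ⟨2, two_pos, fun R₀ => ?_⟩
  obtain ⟨p, hp, hR₀p, hp_mod⟩ := Nat.exists_prime_gt_modEq_one (k := 4) ⌈R₀⌉₊ (by norm_num)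
  have : Fact p.Prime := ⟨hp⟩
  have hp4 : p % 4 = 1 := hp_mod
  have hsq : IsSquare (-1 : ZMod (p ^ 2)) :=
    isSquare_neg_one_zmod_pow_succ (Nat.odd_iff.mpr (by omega))
      (ZMod.exists_sq_eq_neg_one_iff.mpr (by omega)) 1
  have hcount := three_mul_latticePointsParabola_natCast (p ^ 2) hsq
  have hzero : (p : ℤ) ≤ #{x : ZMod (p ^ 2) | x ^ 2 = 0} := by
    exact_mod_cast le_card_filter_sq_eq_zero p
  have hlower : 8 * (p : ℝ) ^ 4 + 6 * p + 1 ≤ 3 * latticePointsParabola ((p : ℝ) ^ 2) := by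
    push_cast at hcount
    have : 8 * (p : ℤ) ^ 4 + 6 * p + 1 ≤ 3 * latticePointsParabola ((p : ℝ) ^ 2) := by
      linarith
    exact_mod_cast this
  have hp1 : (1 : ℝ) < p := by exact_mod_cast hp.one_lt
  refine ⟨(p : ℝ) ^ 2, ?_, by nlinarith, ?_⟩
  · calc R₀ ≤ ⌈R₀⌉₊ := Nat.le_ceil R₀
      _ ≤ p := by exact_mod_cast hR₀p.le
      _ ≤ (p : ℝ) ^ 2 := by nlinarith
  · rw [Real.sqrt_sq (by positivity)]
    linarith
end

section
/- For every positive integer M, setting R = M², the boundary of the dilate R·P₂ contains at least 4M lattice points; that is, #{(x,y) ∈ ℤ² : |x| ≤ R and |y| = R − x²/R} ≥ 4M. In particular the points (kM, ±(M² − k²)) for −M ≤ k ≤ M all lie on this boundary. -/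
/-!
The points `(kM, ±(M² - k²))`, `|k| ≤ M`, lie on the boundary because `(kM)²/M² = k²`.
Their first coordinates `kM` are pairwise distinct, and the two signs give the same point
only when `k = ±M`, so there are `(2M + 1) + (2M - 1) = 4M` of them.
-/

open Finset

def OnDilatedBoundary (R : ℝ) (p : ℤ × ℤ) : Prop :=
  |(p.1 : ℝ)| ≤ R ∧ |(p.2 : ℝ)| = R - (p.1 : ℝ) ^ 2 / R

lemma onDilatedBoundary_neg_snd {R : ℝ} {x y : ℤ} :
    OnDilatedBoundary R (x, -y) ↔ OnDilatedBoundary R (x, y) := by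
  simp [OnDilatedBoundary]

lemma finite_setOf_abs_intCast_le (R : ℝ) : {x : ℤ | |(x : ℝ)| ≤ R}.Finite := by
  convert Set.finite_Icc ⌈-R⌉ ⌊R⌋ using 1
  ext x
  simp [abs_le, Int.le_floor, Int.ceil_le]

lemma finite_setOf_onDilatedBoundary (R : ℝ) : {p | OnDilatedBoundary R p}.Finite := by
  refine ((finite_setOf_abs_intCast_le R).prod (finite_setOf_abs_intCast_le R)).subset ?_
  rintro ⟨x, y⟩ ⟨hx, hy⟩
  have hR : 0 ≤ R := (abs_nonneg _).trans hx
  refine ⟨hx, ?_⟩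
  change |(y : ℝ)| ≤ R
  rw [hy]
  linarith [div_nonneg (sq_nonneg (x : ℝ)) hR]

lemma onDilatedBoundary_mul_sub_sq {M : ℕ} {k : ℤ} (hk : |k| ≤ M) :
    OnDilatedBoundary ((M : ℝ) ^ 2) (k * M, M ^ 2 - k ^ 2) := by
  have hkR : |(k : ℝ)| ≤ M := by exact_mod_cast hk
  have hk2 : (k : ℝ) ^ 2 ≤ (M : ℝ) ^ 2 := sq_le_sq' (abs_le.1 hkR).1 (abs_le.1 hkR).2
  have hdiv : ((k : ℝ) * M) ^ 2 / (M : ℝ) ^ 2 = (k : ℝ) ^ 2 := by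
    rcases eq_or_ne (M : ℝ) 0 with hM | hM
    · have : (k : ℝ) = 0 := abs_nonpos_iff.1 (hM ▸ hkR)
      simp [this, hM]
    · field_simp
  constructor
  · push_cast
    rw [abs_mul, Nat.abs_cast, sq]
    exact mul_le_mul_of_nonneg_right hkR (Nat.cast_nonneg M)
  · push_cast
    rw [hdiv, abs_of_nonneg (sub_nonneg.2 hk2)]

noncomputable def parabolaLatticePoints (M : ℕ) : Finset (ℤ × ℤ) :=
  (Icc (-(M : ℤ)) M).image (fun k : ℤ => (k * M, M ^ 2 - k ^ 2)) ∪
    (Ioo (-(M : ℤ)) M).image (fun k : ℤ => (k * M, -(M ^ 2 - k ^ 2)))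

lemma coe_parabolaLatticePoints_subset (M : ℕ) :
    ↑(parabolaLatticePoints M) ⊆ {p | OnDilatedBoundary ((M : ℝ) ^ 2) p} := by
  intro p hp
  simp only [parabolaLatticePoints, coe_union, coe_image, coe_Icc, coe_Ioo] at hp
  rcases hp with ⟨k, hk, rfl⟩ | ⟨k, hk, rfl⟩
  · exact onDilatedBoundary_mul_sub_sq (abs_le.2 hk)
  · exact onDilatedBoundary_neg_snd.2 (onDilatedBoundary_mul_sub_sq (abs_le.2 ⟨hk.1.le, hk.2.le⟩))

lemma card_parabolaLatticePoints {M : ℕ} (hM : 0 < M) :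
    #(parabolaLatticePoints M) = 4 * M := by
  have hM' : (M : ℤ) ≠ 0 := by exact_mod_cast hM.ne'
  have hinj (g : ℤ → ℤ) : Function.Injective (fun k => (k * (M : ℤ), g k)) :=
    Function.Injective.of_comp (f := Prod.fst) (mul_left_injective₀ hM')
  rw [parabolaLatticePoints, card_union_of_disjoint, card_image_of_injective _ (hinj _),
    card_image_of_injective _ (hinj _), Int.card_Icc, Int.card_Ioo]
  · omega
  simp only [disjoint_left, mem_image, mem_Icc, mem_Ioo]
  rintro _ ⟨k, -, rfl⟩ ⟨j, ⟨hj₁, hj₂⟩, hjk⟩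
  obtain ⟨hjk₁, hjk₂⟩ := Prod.mk.inj hjk
  obtain rfl : j = k := mul_left_injective₀ hM' hjk₁
  nlinarith

lemma four_mul_le_card_onDilatedBoundary (M : ℕ) :
    4 * M ≤ Nat.card {p | OnDilatedBoundary ((M : ℝ) ^ 2) p} := by
  obtain rfl | hM := M.eq_zero_or_pos
  · simp
  rw [Nat.card_coe_set_eq, ← card_parabolaLatticePoints hM, ← Set.ncard_coe_finset]
  exact Set.ncard_le_ncard (coe_parabolaLatticePoints_subset M)
    (finite_setOf_onDilatedBoundary _)

theorem stmt_16_general (M : ℕ) :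
    4 * M ≤ Nat.card {p : ℤ × ℤ //
        |(p.1 : ℝ)| ≤ ((M : ℝ) ^ 2) ∧
        |(p.2 : ℝ)| = (M : ℝ) ^ 2 - (p.1 : ℝ) ^ 2 / (M : ℝ) ^ 2} ∧
      ∀ k : ℤ, -(M : ℤ) ≤ k → k ≤ (M : ℤ) →
        |((k * M : ℤ) : ℝ)| ≤ (M : ℝ) ^ 2 ∧
        |(((M : ℤ) ^ 2 - k ^ 2 : ℤ) : ℝ)|
          = (M : ℝ) ^ 2 - ((k * M : ℤ) : ℝ) ^ 2 / (M : ℝ) ^ 2 :=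
  ⟨four_mul_le_card_onDilatedBoundary M,
    fun _ h₁ h₂ => onDilatedBoundary_mul_sub_sq (abs_le.2 ⟨h₁, h₂⟩)⟩

/-- For `R = M²`, the boundary `{(x,y) : |x| ≤ R, |y| = R - x²/R}` of `R · P₂` contains
at least `4M` lattice points; in particular the points `(kM, ±(M² - k²))` for
`-M ≤ k ≤ M` lie on it. -/
theorem stmt_16 (M : ℕ) (hM : 0 < M) :
    4 * M ≤ Nat.card {p : ℤ × ℤ //
        |(p.1 : ℝ)| ≤ ((M : ℝ) ^ 2) ∧
        |(p.2 : ℝ)| = (M : ℝ) ^ 2 - (p.1 : ℝ) ^ 2 / (M : ℝ) ^ 2} ∧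
      ∀ k : ℤ, -(M : ℤ) ≤ k → k ≤ (M : ℤ) →
        |((k * M : ℤ) : ℝ)| ≤ (M : ℝ) ^ 2 ∧
        |(((M : ℤ) ^ 2 - k ^ 2 : ℤ) : ℝ)|
          = (M : ℝ) ^ 2 - ((k * M : ℤ) : ℝ) ^ 2 / (M : ℝ) ^ 2 :=
  stmt_16_general M
end
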